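/- arXiv:2307.05076 — 2 statements merged into one kernel-verified Lean document; each statement's English description precedes it below -/
import Mathlib

section
/- Every Nash equilibrium of a taxed game is a Nash equilibrium of the corresponding cost-free game: if σ is a strategy profile such that no agent i has a deviation σ_i' with u_i^τ(ρ(σ_{-i}, σ_i')) > u_i^τ(ρ(σ)), then no agent i has a deviation σ_i' such that i ∉ W(σ) and i ∈ W(σ_{-i}, σ_i'). That is, NE(G^τ) ⊆ NE(G^0) for every taxation scheme τ. -/
/-- every Nash equilibrium of a taxed game is a Nash equilibrium
of the cost-free game. In the taxed game utilities are lexicographic with goal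
satisfaction dominating (a goal-satisfying run always yields strictly higher
taxed utility than a non-satisfying one), so if no agent has a strictly
utility-improving deviation in `G^τ`, then no agent who is a loser can deviate
to become a winner — i.e. `σ` is also a Nash equilibrium of `G^0`. -/
theorem stmt_7 {ι Run : Type} [DecidableEq ι] {S : ι → Type}
    (run : (∀ i, S i) → Run)
    (sat : ι → Run → Prop)
    (uτ : ι → Run → ℝ)
    (hlex : ∀ i ρ1 ρ2, sat i ρ1 → ¬ sat i ρ2 → uτ i ρ1 > uτ i ρ2)
    (σ : ∀ i, S i)
    (hNEτ : ∀ i (s' : S i),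
      ¬ uτ i (run (Function.update σ i s')) > uτ i (run σ)) :
    ∀ i (s' : S i),
      ¬ (¬ sat i (run σ) ∧ sat i (run (Function.update σ i s'))) := by
  rintro i s' ⟨hns, hs⟩
  exact hNEτ i s' (hlex i _ _ hs hns)
end

section
/- If the cost-free game G^0 has a Nash equilibrium σ whose run satisfies Υ (i.e., NE_Υ(G^0) ≠ ∅), then Υ is E-Nash implementable in G using a static taxation scheme: there exists a static τ with NE_Υ(G^τ) ≠ ∅. -/
/-!
A static tax `τ i = ĉ i - C i`, with `ĉ i ≥ 0` an upper bound of `C i`, makes every agent's taxed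
cost the constant `ĉ i`. Under constant costs the limit-average cost equals the maximal step cost,
so an agent's utility is `1` if her goal holds and `-ĉ i ≤ 0` otherwise: the only profitable
deviations in `G^τ` are those that turn a lost goal into a won one, exactly as in `G^0`.
Hence `G^τ` and `G^0` have the same Nash equilibria.
-/

open Filter

theorem cesaro_mean_const (r : ℝ) (t : ℕ) :
    (1 / (t + 1 : ℝ)) * ∑ _j ∈ Finset.range (t + 1), r = r := by
  rw [Finset.sum_const, Finset.card_range, nsmul_eq_mul]
  push_cast
  field_simp

section ConstantCosts

variable {ι State Act : Type} {S : ι → Type}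
  (run : (∀ i, S i) → ℕ → State × Act)
  (sat : ι → (ℕ → State × Act) → Prop) [∀ i ρ, Decidable (sat i ρ)]
  (lavg : (ι → State × Act → ℝ) → ι → (∀ i, S i) → ℝ)
  (u : (ι → State × Act → ℝ) → ι → (∀ i, S i) → ℝ)

theorem utility_of_const_cost [Nonempty State] [Nonempty Act]
    (hlavg : ∀ D i σ, lavg D i σ =
      liminf (fun t : ℕ => (1 / (t + 1 : ℝ)) *
        ∑ j ∈ Finset.range (t + 1), D i (run σ j)) atTop)
    (hu : ∀ D i σ, u D i σ =
      if sat i (run σ) then 1 + (⨆ sa : State × Act, D i sa) - lavg D i σ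
      else - lavg D i σ)
    (k : ι → ℝ) (i : ι) (σ : ∀ i, S i) :
    u (fun i _ => k i) i σ = if sat i (run σ) then 1 else -k i := by
  have hlavg_k : lavg (fun i _ => k i) i σ = k i := by
    simp only [hlavg, cesaro_mean_const, liminf_const]
  rw [hu, hlavg_k, ciSup_const, add_sub_cancel_right]

theorem mem_NE_const_cost_iff [DecidableEq ι] [Nonempty State] [Nonempty Act]
    (hlavg : ∀ D i σ, lavg D i σ =
      liminf (fun t : ℕ => (1 / (t + 1 : ℝ)) *
        ∑ j ∈ Finset.range (t + 1), D i (run σ j)) atTop)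
    (hu : ∀ D i σ, u D i σ =
      if sat i (run σ) then 1 + (⨆ sa : State × Act, D i sa) - lavg D i σ
      else - lavg D i σ)
    (NE : (ι → State × Act → ℝ) → Set (∀ i, S i))
    (hNE : ∀ D σ, σ ∈ NE D ↔ ∀ i (s' : S i),
      ¬ u D i (Function.update σ i s') > u D i σ)
    (k : ι → ℝ) (hk : ∀ i, -1 < k i) (σ : ∀ i, S i) :
    σ ∈ NE (fun i _ => k i) ↔
      ∀ i (s' : S i), sat i (run (Function.update σ i s')) → sat i (run σ) := by
  simp only [hNE, utility_of_const_cost run sat lavg u hlavg hu]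
  refine forall₂_congr fun i s' => ?_
  by_cases hdev : sat i (run (Function.update σ i s')) <;>
    by_cases hσ : sat i (run σ) <;>
    simp [hdev, hσ] <;> linarith [hk i]

end ConstantCosts

theorem stmt_18_general {ι State Act : Type} [DecidableEq ι]
    [Fintype State] [Fintype Act] [Nonempty State] [Nonempty Act]
    {S : ι → Type}
    (run : (∀ i, S i) → ℕ → State × Act)
    (sat : ι → (ℕ → State × Act) → Prop) [∀ i ρ, Decidable (sat i ρ)]
    (satΥ : (ℕ → State × Act) → Prop)
    (C : ι → State × Act → ℝ)
    (lavg : (ι → State × Act → ℝ) → ι → (∀ i, S i) → ℝ)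
    (hlavg : ∀ D i σ, lavg D i σ =
      liminf (fun t : ℕ => (1 / (t + 1 : ℝ)) *
        ∑ j ∈ Finset.range (t + 1), D i (run σ j)) atTop)
    (u : (ι → State × Act → ℝ) → ι → (∀ i, S i) → ℝ)
    (hu : ∀ D i σ, u D i σ =
      if sat i (run σ) then 1 + (⨆ sa : State × Act, D i sa) - lavg D i σ
      else - lavg D i σ)
    (NE : (ι → State × Act → ℝ) → Set (∀ i, S i))
    (hNE : ∀ D σ, σ ∈ NE D ↔ ∀ i (s' : S i),
      ¬ u D i (Function.update σ i s') > u D i σ)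
    (hE0 : ∃ σ, σ ∈ NE (fun _ _ => 0) ∧ satΥ (run σ)) :
    ∃ τ : ι → State × Act → ℝ, (∀ i sa, 0 ≤ τ i sa) ∧
      ∃ σ, σ ∈ NE (fun i sa => C i sa + τ i sa) ∧ satΥ (run σ) := by
  obtain ⟨σ₀, hσ₀, hΥ⟩ := hE0
  set ĉ : ι → ℝ := fun i => max (⨆ sa, C i sa) 0
  have hC_le : ∀ i sa, C i sa ≤ ĉ i := fun i sa =>
    le_max_of_le_left (le_ciSup (Set.finite_range (C i)).bddAbove sa)
  have hNE_iff := mem_NE_const_cost_iff run sat lavg u hlavg hu NE hNE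
  refine ⟨fun i sa => ĉ i - C i sa, fun i sa => sub_nonneg.2 (hC_le i sa), σ₀, ?_, hΥ⟩
  simp only [add_sub_cancel]
  exact (hNE_iff ĉ (fun _ => neg_one_lt_zero.trans_le (le_max_right _ _)) σ₀).2
    ((hNE_iff 0 (fun _ => neg_one_lt_zero) σ₀).1 hσ₀)

/-- if the cost-free game `G^0` has a Nash equilibrium whose run
satisfies `Υ`, then `Υ` is E-Nash implementable in `G` by a static taxation
scheme: there is a static scheme `τ` (nonnegative per-step taxes) such that
the taxed game `G^τ` has a Nash equilibrium whose run satisfies `Υ`.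
Utilities of a game with cost function `D` are lexicographic, built from the
limit-average cost along the run and the maximal per-step cost `⨆ sa, D i sa`. -/
theorem stmt_18 {ι State Act : Type} [DecidableEq ι]
    [Fintype State] [Fintype Act] [Nonempty State] [Nonempty Act]
    {S : ι → Type}
    (run : (∀ i, S i) → ℕ → State × Act)
    (sat : ι → (ℕ → State × Act) → Prop) [∀ i ρ, Decidable (sat i ρ)]
    (satΥ : (ℕ → State × Act) → Prop)
    (C : ι → State × Act → ℝ) (hC : ∀ i sa, 0 ≤ C i sa)
    (lavg : (ι → State × Act → ℝ) → ι → (∀ i, S i) → ℝ)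
    (hlavg : ∀ D i σ, lavg D i σ =
      liminf (fun t : ℕ => (1 / (t + 1 : ℝ)) *
        ∑ j ∈ Finset.range (t + 1), D i (run σ j)) atTop)
    (u : (ι → State × Act → ℝ) → ι → (∀ i, S i) → ℝ)
    (hu : ∀ D i σ, u D i σ =
      if sat i (run σ) then 1 + (⨆ sa : State × Act, D i sa) - lavg D i σ
      else - lavg D i σ)
    (NE : (ι → State × Act → ℝ) → Set (∀ i, S i))
    (hNE : ∀ D σ, σ ∈ NE D ↔ ∀ i (s' : S i),
      ¬ u D i (Function.update σ i s') > u D i σ)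
    (hE0 : ∃ σ, σ ∈ NE (fun _ _ => 0) ∧ satΥ (run σ)) :
    ∃ τ : ι → State × Act → ℝ, (∀ i sa, 0 ≤ τ i sa) ∧
      ∃ σ, σ ∈ NE (fun i sa => C i sa + τ i sa) ∧ satΥ (run σ) :=
  stmt_18_general run sat satΥ C lavg hlavg u hu NE hNE hE0
end
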